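/- Let S = {r1,…,rn} be an SREU problem over a finite signature Σ with variables x1,…,xm, where ri = (Ei ⊩ e*i). Let a1,…,am and ⊥ be fresh constants and f a fresh unary function symbol, let σf be the substitution xj ↦ f(aj), and set ψi := ((⋀_{e∈Ei} e·σf) ∧ (⋀_{k≠j} ak ≠ aj)) → e*i·σf, and ΦS := ⋀i ψi. For ground terms u1,…,um ∈ T(Σ) let w_u(x) := ITE(x = a1, u1, ITE(x = a2, u2, …, ITE(x = am, um, ⊥)…)), where in any structure ITE(s = t, r, r′) denotes the element equal to the value of r if s = t holds and to the value of r′ otherwise. Then: S has a solution if and only if there exist ground terms u1,…,um ∈ T(Σ) such that ΦS{w_u/f} holds in every nonempty (Σ ∪ {a1,…,am,⊥})-structure. -/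

import Mathlib

namespace SyGuS

/-- Terms over a ranked alphabet: symbols `F`, each of arity `ar f`. -/
inductive Tm (F : Type) (ar : F → ℕ) : Type
  | app (f : F) (args : Fin (ar f) → Tm F ar) : Tm F ar

/-- Arity function on `F ⊕ Fin k`: the `k` extra symbols are constants
(the variables `x₁,…,x_k`, treated as constants). -/
abbrev varAr {F : Type} (ar : F → ℕ) (k : ℕ) : F ⊕ Fin k → ℕ := Sum.elim ar fun _ => 0

/-- Arity function on `F ⊕ Unit`: the extra symbol is the function symbol `f` of arity `k`. -/
abbrev fAr {F : Type} (ar : F → ℕ) (k : ℕ) : F ⊕ Unit → ℕ := Sum.elim ar fun _ => k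

/-- A (nonempty) first-order structure for the ranked alphabet `(F, ar)`. -/
structure Str (F : Type) (ar : F → ℕ) : Type 1 where
  D : Type
  [nonemptyD : Nonempty D]
  interp : (f : F) → (Fin (ar f) → D) → D

attribute [instance] Str.nonemptyD

/-- Evaluation of a ground term in a structure. -/
def Tm.eval {F : Type} {ar : F → ℕ} (M : Str F ar) : Tm F ar → M.D
  | .app f args => M.interp f fun i => (args i).eval M

/-- First-order substitution: replace the variables `x₁,…,x_k` by terms. -/
def Tm.instVars {F : Type} {ar : F → ℕ} {k : ℕ} (σ : Fin k → Tm F ar) :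
    Tm (F ⊕ Fin k) (varAr ar k) → Tm F ar
  | .app (Sum.inl g) args => .app g fun i => Tm.instVars σ (args i)
  | .app (Sum.inr i) _ => σ i

/-- Second-order substitution `·{w/f}`: replace every application `f(s₁,…,s_k)` of the
distinguished symbol `f` by `w{s₁/x₁,…,s_k/x_k}`. -/
def Tm.soSubst {F : Type} {ar : F → ℕ} {k : ℕ} (w : Tm (F ⊕ Fin k) (varAr ar k)) :
    Tm (F ⊕ Unit) (fAr ar k) → Tm F ar
  | .app (Sum.inl g) args => .app g fun i => Tm.soSubst w (args i)
  | .app (Sum.inr _) args => Tm.instVars (fun i => Tm.soSubst w (args i)) w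

/-- Renaming of symbols along an arity-preserving map. -/
def Tm.rename {F G : Type} {arF : F → ℕ} {arG : G → ℕ} (h : F → G)
    (hh : ∀ f, arG (h f) = arF f) : Tm F arF → Tm G arG
  | .app f args => .app (h f) fun i => (args (Fin.cast (hh f) i)).rename h hh

/-- Equational consequence: `E ⊢ s = t` iff every structure satisfying all
equations of `E` also satisfies `s = t`. -/
def EqCons {F : Type} {ar : F → ℕ} (E : Set (Tm F ar × Tm F ar)) (s t : Tm F ar) : Prop :=
  ∀ M : Str F ar, (∀ e ∈ E, Tm.eval M e.1 = Tm.eval M e.2) → s.eval M = t.eval M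

mutual
/-- Terms (possibly containing if-then-else) over a ranked alphabet. -/
inductive ITm (F : Type) (ar : F → ℕ) : Type
  | app (f : F) (args : Fin (ar f) → ITm F ar) : ITm F ar
  | ite (c : IFm F ar) (t e : ITm F ar) : ITm F ar

/-- Quantifier-free formulas over terms with if-then-else. -/
inductive IFm (F : Type) (ar : F → ℕ) : Type
  | eq (s t : ITm F ar) : IFm F ar
  | not (φ : IFm F ar) : IFm F ar
  | and (φ ψ : IFm F ar) : IFm F ar
  | or (φ ψ : IFm F ar) : IFm F ar
end

open Classical in
mutual
/-- Evaluation of a term in a structure; `ITE(c,t,e)` evaluates to the value of `t`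
if `c` holds and to the value of `e` otherwise. -/
noncomputable def ITm.eval {F : Type} {ar : F → ℕ} (M : Str F ar) : ITm F ar → M.D
  | .app f args => M.interp f fun i => ITm.eval M (args i)
  | .ite c t e => if IFm.holds M c then ITm.eval M t else ITm.eval M e

/-- Truth of a formula in a structure. -/
noncomputable def IFm.holds {F : Type} {ar : F → ℕ} (M : Str F ar) : IFm F ar → Prop
  | .eq s t => ITm.eval M s = ITm.eval M t
  | .not φ => ¬ IFm.holds M φ
  | .and φ ψ => IFm.holds M φ ∧ IFm.holds M ψ
  | .or φ ψ => IFm.holds M φ ∨ IFm.holds M ψ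
end

/-- Validity: truth in every nonempty structure. -/
def IFm.valid {F : Type} {ar : F → ℕ} (φ : IFm F ar) : Prop := ∀ M : Str F ar, IFm.holds M φ

mutual
/-- First-order substitution of terms for the variables `x₁,…,x_k` in a term. -/
def ITm.instVars {F : Type} {ar : F → ℕ} {k : ℕ} (σ : Fin k → ITm F ar) :
    ITm (F ⊕ Fin k) (varAr ar k) → ITm F ar
  | .app (Sum.inl g) args => .app g fun i => ITm.instVars σ (args i)
  | .app (Sum.inr i) _ => σ i
  | .ite c t e => .ite (IFm.instVars σ c) (ITm.instVars σ t) (ITm.instVars σ e)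

/-- First-order substitution in a formula. -/
def IFm.instVars {F : Type} {ar : F → ℕ} {k : ℕ} (σ : Fin k → ITm F ar) :
    IFm (F ⊕ Fin k) (varAr ar k) → IFm F ar
  | .eq s t => .eq (ITm.instVars σ s) (ITm.instVars σ t)
  | .not φ => .not (IFm.instVars σ φ)
  | .and φ ψ => .and (IFm.instVars σ φ) (IFm.instVars σ ψ)
  | .or φ ψ => .or (IFm.instVars σ φ) (IFm.instVars σ ψ)
end

mutual
/-- Second-order substitution `·{w/f}` on terms: every application `f(s₁,…,s_k)` of the
distinguished `k`-ary symbol `f` is replaced by `w{s₁/x₁,…,s_k/x_k}`. -/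
def ITm.soSubst {F : Type} {ar : F → ℕ} {k : ℕ} (w : ITm (F ⊕ Fin k) (varAr ar k)) :
    ITm (F ⊕ Unit) (fAr ar k) → ITm F ar
  | .app (Sum.inl g) args => .app g fun i => ITm.soSubst w (args i)
  | .app (Sum.inr _) args => ITm.instVars (fun i => ITm.soSubst w (args i)) w
  | .ite c t e => .ite (IFm.soSubst w c) (ITm.soSubst w t) (ITm.soSubst w e)

/-- Second-order substitution `·{w/f}` on formulas. -/
def IFm.soSubst {F : Type} {ar : F → ℕ} {k : ℕ} (w : ITm (F ⊕ Fin k) (varAr ar k)) :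
    IFm (F ⊕ Unit) (fAr ar k) → IFm F ar
  | .eq s t => .eq (ITm.soSubst w s) (ITm.soSubst w t)
  | .not φ => .not (IFm.soSubst w φ)
  | .and φ ψ => .and (IFm.soSubst w φ) (IFm.soSubst w ψ)
  | .or φ ψ => .or (IFm.soSubst w φ) (IFm.soSubst w ψ)
end

/-- Finite conjunction (empty conjunction is a tautology `⊤`, encoded via a given term). -/
def IFm.bigAnd {F : Type} {ar : F → ℕ} (top : IFm F ar) (l : List (IFm F ar)) : IFm F ar :=
  l.foldr IFm.and top

/-! ### Statement 0: reduction of SREU to SyGuS-EUF (Lemma `sreutoeuf`)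

The SREU problem `S` is a finite list of rigid equations `(Eᵢ, e*ᵢ)` over the finite
signature `Σ = (F, ar)` with variables `x₁,…,x_m`.  We extend the signature by fresh
constants `a₁,…,a_m` and `⊥` (the summand `Fin m ⊕ Unit`), and by a fresh unary function
symbol `f` (the summand `Unit`). -/

/-- The extended signature `Σ ∪ {a₁,…,a_m, ⊥}`. -/
abbrev SigA (F : Type) (m : ℕ) : Type := F ⊕ (Fin m ⊕ Unit)

/-- Arities for the extended signature: the fresh symbols are constants. -/
abbrev arA {F : Type} (ar : F → ℕ) (m : ℕ) : SigA F m → ℕ := Sum.elim ar fun _ => 0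

section Statement0

variable {F : Type} (ar : F → ℕ) (m : ℕ)

/-- The constant `a_j`, as a term over `Σ ∪ {a₁,…,a_m,⊥} ∪ {f}`. -/
def aConst (j : Fin m) : ITm (SigA F m ⊕ Unit) (fAr (arA ar m) 1) :=
  .app (Sum.inl (Sum.inr (Sum.inl j))) fun i => i.elim0

/-- The constant `⊥`, as a term over `Σ ∪ {a₁,…,a_m,⊥} ∪ {f}`. -/
def botConst : ITm (SigA F m ⊕ Unit) (fAr (arA ar m) 1) :=
  .app (Sum.inl (Sum.inr (Sum.inr ()))) fun i => i.elim0

/-- The term `f(a_j)`. -/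
def fOfA (j : Fin m) : ITm (SigA F m ⊕ Unit) (fAr (arA ar m) 1) :=
  .app (Sum.inr ()) fun _ => aConst ar m j

/-- The substitution `σ_f : x_j ↦ f(a_j)`, applied to a term of `T(Σ, {x₁,…,x_m})`. -/
def sigmaF : Tm (F ⊕ Fin m) (varAr ar m) → ITm (SigA F m ⊕ Unit) (fAr (arA ar m) 1)
  | .app (Sum.inl g) args => .app (Sum.inl (Sum.inl g)) fun i => sigmaF (args i)
  | .app (Sum.inr j) _ => fOfA ar m j

/-- A tautology `⊥ = ⊥`, used as the empty conjunction. -/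
def trueFm : IFm (SigA F m ⊕ Unit) (fAr (arA ar m) 1) :=
  .eq (botConst ar m) (botConst ar m)

/-- The formula `⋀_{k ≠ j} a_k ≠ a_j`. -/
def distinctFm : IFm (SigA F m ⊕ Unit) (fAr (arA ar m) 1) :=
  IFm.bigAnd (trueFm ar m)
    ((List.finRange m).flatMap fun k =>
      (List.finRange m).filterMap fun j =>
        if k ≠ j then some (.not (.eq (aConst ar m k) (aConst ar m j))) else none)

/-- A rigid equation `E ⊩ e*`: a finite list `E` of equations together with a target
equation `e*`, between terms of `T(Σ, {x₁,…,x_m})`. -/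
abbrev RigidEq (F : Type) (ar : F → ℕ) (m : ℕ) : Type :=
  List (Tm (F ⊕ Fin m) (varAr ar m) × Tm (F ⊕ Fin m) (varAr ar m)) ×
    (Tm (F ⊕ Fin m) (varAr ar m) × Tm (F ⊕ Fin m) (varAr ar m))

/-- The formula `ψᵢ := ((⋀_{e ∈ Eᵢ} e·σ_f) ∧ ⋀_{k ≠ j} a_k ≠ a_j) → e*ᵢ·σ_f`. -/
def psiOf (r : RigidEq F ar m) : IFm (SigA F m ⊕ Unit) (fAr (arA ar m) 1) :=
  .or (.not (.and
        (IFm.bigAnd (trueFm ar m) (r.1.map fun p => .eq (sigmaF ar m p.1) (sigmaF ar m p.2)))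
        (distinctFm ar m)))
     (.eq (sigmaF ar m r.2.1) (sigmaF ar m r.2.2))

/-- The formula `Φ_S := ⋀ᵢ ψᵢ`. -/
def PhiS (S : List (RigidEq F ar m)) : IFm (SigA F m ⊕ Unit) (fAr (arA ar m) 1) :=
  IFm.bigAnd (trueFm ar m) (S.map (psiOf ar m))

/-- The substitution `σ` (assigning ground `Σ`-terms to the variables) solves the rigid
equation `E ⊩ e*`, i.e. `Eσ ⊢ e*σ`. -/
def SolvesRigid (σ : Fin m → Tm F ar) (r : RigidEq F ar m) : Prop :=
  EqCons {e | ∃ p ∈ r.1, e = (Tm.instVars σ p.1, Tm.instVars σ p.2)}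
    (Tm.instVars σ r.2.1) (Tm.instVars σ r.2.2)

/-- Embedding of ground `Σ`-terms into the terms over `Σ ∪ {a₁,…,a_m,⊥}` with the
variable `x`. -/
def embedGround : Tm F ar → ITm (SigA F m ⊕ Fin 1) (varAr (arA ar m) 1)
  | .app g args => .app (Sum.inl (Sum.inl g)) fun i => embedGround (args i)

/-- The variable `x` (the bound variable of the unary `f`). -/
def xVar : ITm (SigA F m ⊕ Fin 1) (varAr (arA ar m) 1) := .app (Sum.inr 0) fun i => i.elim0

/-- The constant `a_j`, as a candidate-expression term. -/
def aVar (j : Fin m) : ITm (SigA F m ⊕ Fin 1) (varAr (arA ar m) 1) :=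
  .app (Sum.inl (Sum.inr (Sum.inl j))) fun i => i.elim0

/-- The constant `⊥`, as a candidate-expression term. -/
def botVar : ITm (SigA F m ⊕ Fin 1) (varAr (arA ar m) 1) :=
  .app (Sum.inl (Sum.inr (Sum.inr ()))) fun i => i.elim0

/-- The candidate expression
`w_u(x) := ITE(x = a₁, u₁, ITE(x = a₂, u₂, …, ITE(x = a_m, u_m, ⊥)…))`. -/
def wOf (u : Fin m → Tm F ar) : ITm (SigA F m ⊕ Fin 1) (varAr (arA ar m) 1) :=
  (List.finRange m).foldr
    (fun j acc => .ite (.eq (xVar ar m) (aVar ar m j)) (embedGround ar m (u j)) acc)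
    (botVar ar m)

end Statement0

/-! If `σ` solves `S`, then in every structure in which `a₁,…,a_m` are pairwise distinct the
candidate `w_σ` sends `a_j` to `σ(x_j)`, so `(t·σ_f){w_σ/f}` evaluates like `tσ` in the
`Σ`-reduct and `ψᵢ{w_σ/f}` says that the reduct satisfies `Eᵢσ → e*ᵢσ`; where two `a_j`
coincide, `ψᵢ` holds vacuously. Conversely, every `Σ`-structure extends by fresh, pairwise
distinct elements for `a₁,…,a_m,⊥` to a structure whose reduct evaluates ground `Σ`-terms
as the original one does, so validity of `Φ_S{w_u/f}` makes `u` a solution. -/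

section BigAnd

variable {F : Type} {ar : F → ℕ}

theorem IFm.holds_bigAnd (M : Str F ar) (top : IFm F ar) (l : List (IFm F ar)) :
    (IFm.bigAnd top l).holds M ↔ top.holds M ∧ ∀ φ ∈ l, φ.holds M := by
  induction l with
  | nil => simp [IFm.bigAnd]
  | cons φ l ih =>
    simp only [IFm.bigAnd, List.foldr_cons] at ih ⊢
    simp only [IFm.holds, ih, List.forall_mem_cons]
    tauto

theorem IFm.soSubst_bigAnd {k : ℕ} (w : ITm (F ⊕ Fin k) (varAr ar k))
    (top : IFm (F ⊕ Unit) (fAr ar k)) (l : List (IFm (F ⊕ Unit) (fAr ar k))) :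
    (IFm.bigAnd top l).soSubst w = IFm.bigAnd (top.soSubst w) (l.map (IFm.soSubst w)) := by
  induction l with
  | nil => rfl
  | cons φ l ih =>
    simp only [IFm.bigAnd, List.foldr_cons, List.map_cons] at ih ⊢
    rw [IFm.soSubst, ih]

end BigAnd

def Str.reduct {F G : Type} {ar : F → ℕ} {arG : G → ℕ}
    (N : Str (F ⊕ G) (Sum.elim ar arG)) : Str F ar where
  D := N.D
  interp g := N.interp (Sum.inl g)

section Reduction

variable {F : Type} {ar : F → ℕ} {m : ℕ}

def RigidHolds (M : Str F ar) (σ : Fin m → Tm F ar) (r : RigidEq F ar m) : Prop :=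
  (∀ p ∈ r.1, (p.1.instVars σ).eval M = (p.2.instVars σ).eval M) →
    (r.2.1.instVars σ).eval M = (r.2.2.instVars σ).eval M

theorem solvesRigid_iff_forall_rigidHolds (σ : Fin m → Tm F ar) (r : RigidEq F ar m) :
    SolvesRigid ar m σ r ↔ ∀ M, RigidHolds M σ r := by
  refine forall_congr' fun M => imp_congr_left ⟨fun h p hp => h _ ⟨p, hp, rfl⟩, ?_⟩
  rintro h _ ⟨p, hp, rfl⟩
  exact h p hp

def aVal (N : Str (SigA F m) (arA ar m)) (j : Fin m) : N.D :=
  N.interp (Sum.inr (Sum.inl j)) fun i => i.elim0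

section Eval

variable (N : Str (SigA F m) (arA ar m))

theorem holds_soSubst_bigAnd_trueFm (w : ITm (SigA F m ⊕ Fin 1) (varAr (arA ar m) 1))
    (l : List (IFm (SigA F m ⊕ Unit) (fAr (arA ar m) 1))) :
    ((IFm.bigAnd (trueFm ar m) l).soSubst w).holds N ↔ ∀ φ ∈ l, (φ.soSubst w).holds N := by
  simp [IFm.soSubst_bigAnd, IFm.holds_bigAnd, trueFm, IFm.soSubst, IFm.holds]

theorem eval_soSubst_aConst (w : ITm (SigA F m ⊕ Fin 1) (varAr (arA ar m) 1)) (j : Fin m) :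
    (ITm.soSubst w (aConst ar m j)).eval N = aVal N j := by
  simp only [aConst, ITm.soSubst, ITm.eval, aVal]
  congr 1
  funext i
  exact i.elim0

theorem holds_soSubst_distinctFm_iff (w : ITm (SigA F m ⊕ Fin 1) (varAr (arA ar m) 1)) :
    ((distinctFm ar m).soSubst w).holds N ↔ Function.Injective (aVal N) := by
  have holds_ne (j k : Fin m) :
      (IFm.soSubst w (.not (.eq (aConst ar m j) (aConst ar m k)))).holds N ↔
        aVal N j ≠ aVal N k := by
    simp only [IFm.soSubst, IFm.holds, eval_soSubst_aConst]
  simp only [distinctFm, holds_soSubst_bigAnd_trueFm, List.mem_flatMap, List.mem_filterMap,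
    List.mem_finRange, true_and, Option.ite_none_right_eq_some, Option.some.injEq]
  refine ⟨fun h j k hjk => by_contra fun hne => ?_, ?_⟩
  · exact (holds_ne j k).mp (h _ ⟨j, k, hne, rfl⟩) hjk
  · rintro hinj _ ⟨j, k, hne, rfl⟩
    exact (holds_ne j k).mpr (hinj.ne hne)

theorem eval_instVars_embedGround (σ : Fin 1 → ITm (SigA F m) (arA ar m)) (t : Tm F ar) :
    (ITm.instVars σ (embedGround ar m t)).eval N = t.eval N.reduct := by
  induction t with
  | app g args ih =>
    simp only [embedGround, ITm.instVars, ITm.eval, Tm.eval]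
    exact congrArg (N.interp (Sum.inl g)) (funext ih)

theorem eval_instVars_aVar (σ : Fin 1 → ITm (SigA F m) (arA ar m)) (j : Fin m) :
    (ITm.instVars σ (aVar ar m j)).eval N = aVal N j := by
  simp only [aVar, ITm.instVars, ITm.eval, aVal]
  congr 1
  funext i
  exact i.elim0

theorem eval_instVars_foldr_ite (u : Fin m → Tm F ar) (hinj : Function.Injective (aVal N))
    (σ : Fin 1 → ITm (SigA F m) (arA ar m)) {j : Fin m} (hσ : (σ 0).eval N = aVal N j)
    {l : List (Fin m)} (hj : j ∈ l) :
    (ITm.instVars σ (l.foldr (fun k acc =>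
        .ite (.eq (xVar ar m) (aVar ar m k)) (embedGround ar m (u k)) acc) (botVar ar m))).eval N =
      (u j).eval N.reduct := by
  induction l with
  | nil => exact absurd hj List.not_mem_nil
  | cons k l ih =>
    have hcond : (IFm.instVars σ (.eq (xVar ar m) (aVar ar m k))).holds N ↔ j = k := by
      simp only [IFm.instVars, IFm.holds, xVar, ITm.instVars, eval_instVars_aVar, hσ,
        hinj.eq_iff]
    simp only [List.foldr_cons, ITm.instVars, ITm.eval]
    by_cases hjk : j = k
    · subst hjk
      rw [if_pos (hcond.mpr rfl), eval_instVars_embedGround]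
    · rw [if_neg (mt hcond.mp hjk)]
      exact ih (List.mem_of_ne_of_mem hjk hj)

theorem eval_soSubst_sigmaF (u : Fin m → Tm F ar) (hinj : Function.Injective (aVal N))
    (t : Tm (F ⊕ Fin m) (varAr ar m)) :
    (ITm.soSubst (wOf ar m u) (sigmaF ar m t)).eval N = (t.instVars u).eval N.reduct := by
  induction t with
  | app f args ih =>
    cases f with
    | inl g =>
      simp only [sigmaF, ITm.soSubst, ITm.eval, Tm.instVars, Tm.eval]
      exact congrArg (N.interp (Sum.inl g)) (funext ih)
    | inr j =>
      simp only [sigmaF, fOfA, ITm.soSubst, Tm.instVars]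
      exact eval_instVars_foldr_ite N u hinj _ (eval_soSubst_aConst N _ j) (List.mem_finRange j)

theorem holds_soSubst_psiOf_iff (u : Fin m → Tm F ar) (r : RigidEq F ar m) :
    (IFm.soSubst (wOf ar m u) (psiOf ar m r)).holds N ↔
      (Function.Injective (aVal N) → RigidHolds N.reduct u r) := by
  by_cases hinj : Function.Injective (aVal N)
  · simp only [psiOf, IFm.soSubst, IFm.holds, holds_soSubst_bigAnd_trueFm, List.forall_mem_map,
      holds_soSubst_distinctFm_iff, eval_soSubst_sigmaF N u hinj, hinj, RigidHolds]
    tauto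
  · simp only [psiOf, IFm.soSubst, IFm.holds, holds_soSubst_distinctFm_iff, hinj]
    tauto

theorem holds_soSubst_PhiS_iff (u : Fin m → Tm F ar) (S : List (RigidEq F ar m)) :
    (IFm.soSubst (wOf ar m u) (PhiS ar m S)).holds N ↔
      ∀ r ∈ S, Function.Injective (aVal N) → RigidHolds N.reduct u r := by
  simp only [PhiS, holds_soSubst_bigAnd_trueFm, List.forall_mem_map, holds_soSubst_psiOf_iff]

end Eval

noncomputable def freshExtension (M : Str F ar) : Str (SigA F m) (arA ar m) where
  D := M.D ⊕ (Fin m ⊕ Unit)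
  nonemptyD := ⟨.inr (.inr ())⟩
  interp
    | .inl g, args =>
      .inl (M.interp g fun i => (args i).elim id fun _ => Classical.arbitrary M.D)
    | .inr c, _ => .inr c

variable (M : Str F ar)

theorem injective_aVal_freshExtension : Function.Injective (aVal (freshExtension (m := m) M)) :=
  Sum.inr_injective.comp Sum.inl_injective

theorem eval_reduct_freshExtension (t : Tm F ar) :
    t.eval (freshExtension (m := m) M).reduct = .inl (t.eval M) := by
  induction t with
  | app g args ih =>
    simp only [Tm.eval]
    exact congrArg Sum.inl (congrArg (M.interp g) (funext fun i =>
      congrArg (Sum.elim id fun _ => Classical.arbitrary M.D) (ih i)))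

theorem rigidHolds_reduct_freshExtension_iff (σ : Fin m → Tm F ar) (r : RigidEq F ar m) :
    RigidHolds (freshExtension (m := m) M).reduct σ r ↔ RigidHolds M σ r := by
  simp only [RigidHolds, eval_reduct_freshExtension]
  exact imp_congr (forall₂_congr fun _ _ => Sum.inl_injective.eq_iff) Sum.inl_injective.eq_iff

theorem valid_soSubst_wOf_PhiS_iff (u : Fin m → Tm F ar) (S : List (RigidEq F ar m)) :
    (IFm.soSubst (wOf ar m u) (PhiS ar m S)).valid ↔ ∀ r ∈ S, SolvesRigid ar m u r := by
  simp only [IFm.valid, holds_soSubst_PhiS_iff, solvesRigid_iff_forall_rigidHolds]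
  refine ⟨fun h r hr M => ?_, fun h N r hr _ => h r hr N.reduct⟩
  exact (rigidHolds_reduct_freshExtension_iff M u r).mp
    (h (freshExtension M) r hr (injective_aVal_freshExtension M))

end Reduction

/-- The SREU problem `S` has a solution if and only if there are ground
terms `u₁,…,u_m ∈ T(Σ)` such that `Φ_S{w_u/f}` holds in every nonempty
`(Σ ∪ {a₁,…,a_m,⊥})`-structure. -/
theorem sreu_iff_sygus_euf {F : Type} [Fintype F] (ar : F → ℕ) (m : ℕ)
    (S : List (RigidEq F ar m)) :
    (∃ σ : Fin m → Tm F ar, ∀ r ∈ S, SolvesRigid ar m σ r) ↔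
      (∃ u : Fin m → Tm F ar, IFm.valid (IFm.soSubst (wOf ar m u) (PhiS ar m S))) :=
  exists_congr fun u => (valid_soSubst_wOf_PhiS_iff u S).symm

end SyGuS
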